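/- Let $p \ge 2$ and $1 < s < \infty$. Suppose $V \ge 0$ is integrable on a bounded open set $\Omega'$, $u, h$ are measurable with $V|u|^s, V|h|^s \in L^1(\Omega')$, and $\int_{\Omega'} V(|u|^2+|h|^2)^{(s-2)/2}|u-h|^2\,dx \le c_1\int_{\Omega'}|F|^p\,dx$ for some $F \in L^p$ and $c_1 > 0$. Then for every $\epsilon \in (0,1)$ there is $c(\epsilon, s, c_1) > 0$ with $\int_{\Omega'} V|u-h|^s\,dx \le \epsilon\int_{\Omega'} V|u|^s\,dx + c(\epsilon)\int_{\Omega'}|F|^p\,dx$, provided additionally that $\int_{\Omega'} V|h|^s\,dx \le c_2(\int_{\Omega'} V|u|^s\,dx + \int_{\Omega'}|F|^p\,dx)$ for some $c_2 > 0$. -/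

import Mathlib

/-! Write `d = |a - b|` and `w = |a|² + |b|²`, so that `d² ≤ 2w`. Fix a threshold
`δ > 0`. If `d² ≤ δ w`, then `d^s ≤ δ^(s/2) w^(s/2)`, a small multiple of `|a|^s + |b|^s`.
Otherwise `d² / w ∈ [δ, 2]`, and `d^s = (d² / w)^((s-2)/2) · w^((s-2)/2) d²` is a bounded
multiple of the quadratic quantity. Multiplying by `V` and integrating, the small multiple of
`∫ V|h|^s` is then absorbed by the energy bound. -/

open MeasureTheory

namespace Real

lemma rpow_le_add_rpow_of_mem_Icc {a b t : ℝ} (r : ℝ) (ha : 0 < a) (ht : t ∈ Set.Icc a b) :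
    t ^ r ≤ a ^ r + b ^ r := by
  have hta : 0 < t := ha.trans_le ht.1
  rcases le_total 0 r with hr | hr
  · have := rpow_le_rpow hta.le ht.2 hr
    linarith [rpow_nonneg ha.le r]
  · have := rpow_le_rpow_of_nonpos ha ht.1 hr
    linarith [rpow_nonneg (hta.le.trans ht.2) r]

lemma add_rpow_le_two_rpow_mul_rpow_add_rpow {x y : ℝ} (r : ℝ) (hx : 0 ≤ x) (hy : 0 ≤ y)
    (hr : 0 ≤ r) : (x + y) ^ r ≤ 2 ^ r * (x ^ r + y ^ r) := calc
  (x + y) ^ r ≤ (2 * max x y) ^ r := by rw [two_mul]; gcongr <;> simp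
  _ = 2 ^ r * max x y ^ r := mul_rpow zero_le_two (le_max_of_le_left hx)
  _ = 2 ^ r * max (x ^ r) (y ^ r) := by rw [rpow_max hx hy hr]
  _ ≤ 2 ^ r * (x ^ r + y ^ r) := by
    gcongr; exact max_le_add_of_nonneg (rpow_nonneg hx r) (rpow_nonneg hy r)

lemma sq_rpow_div_two {x : ℝ} (hx : 0 ≤ x) (s : ℝ) : (x ^ 2) ^ (s / 2) = x ^ s := by
  rw [← rpow_natCast_mul hx]
  ring_nf

end Real

open Real

section
variable {s : ℝ}

lemma rpow_sub_two_div_two_mul_sq_le {d w : ℝ} (hd : 0 ≤ d) (hdw : d ^ 2 ≤ 2 * w) :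
    w ^ ((s - 2) / 2) * d ^ 2 ≤ 2 * w ^ (s / 2) := by
  rcases (show 0 ≤ w by nlinarith).eq_or_lt with rfl | hw
  · obtain rfl : d = 0 := by nlinarith
    simp only [ne_eq, OfNat.ofNat_ne_zero, not_false_eq_true, zero_pow, mul_zero]
    positivity
  · calc w ^ ((s - 2) / 2) * d ^ 2 ≤ w ^ ((s - 2) / 2) * (2 * w) := by gcongr
      _ = 2 * w ^ (s / 2) := by
        rw [show s / 2 = (s - 2) / 2 + 1 by ring, rpow_add_one hw.ne']; ring

lemma exists_rpow_le_mul_rpow_add_mul (hs : 0 < s) {ε : ℝ} (hε : 0 < ε) :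
    ∃ C > 0, ∀ d w : ℝ, 0 ≤ d → d ^ 2 ≤ 2 * w →
      d ^ s ≤ ε * w ^ (s / 2) + C * (w ^ ((s - 2) / 2) * d ^ 2) := by
  set δ := ε ^ (2 / s)
  have hδ : 0 < δ := by positivity
  have hδs : δ ^ (s / 2) = ε := by
    rw [← rpow_mul hε.le, div_mul_div_comm, mul_comm, div_self (by positivity), rpow_one]
  refine ⟨δ ^ ((s - 2) / 2) + 2 ^ ((s - 2) / 2), by positivity, fun d w hd hdw => ?_⟩
  have hw : 0 ≤ w := by nlinarith
  rw [← sq_rpow_div_two hd]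
  rcases le_or_gt (d ^ 2) (δ * w) with hsmall | hlarge
  · calc (d ^ 2) ^ (s / 2) ≤ (δ * w) ^ (s / 2) := by gcongr
      _ = ε * w ^ (s / 2) := by rw [mul_rpow hδ.le hw, hδs]
      _ ≤ _ := le_add_of_nonneg_right (by positivity)
  · have hw : 0 < w := by nlinarith
    have hd2 : 0 < d ^ 2 := (mul_nonneg hδ.le hw.le).trans_lt hlarge
    have hratio : d ^ 2 / w ∈ Set.Icc δ 2 :=
      ⟨(le_div_iff₀ hw).2 hlarge.le, (div_le_iff₀ hw).2 hdw⟩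
    calc (d ^ 2) ^ (s / 2) = (d ^ 2 / w) ^ ((s - 2) / 2) * (w ^ ((s - 2) / 2) * d ^ 2) := by
          rw [div_rpow hd2.le hw.le, show s / 2 = (s - 2) / 2 + 1 by ring,
            rpow_add_one hd2.ne']
          field_simp
      _ ≤ (δ ^ ((s - 2) / 2) + 2 ^ ((s - 2) / 2)) * (w ^ ((s - 2) / 2) * d ^ 2) := by
          gcongr
          exact rpow_le_add_rpow_of_mem_Icc _ hδ hratio
      _ ≤ _ := le_add_of_nonneg_left (by positivity)

lemma sq_abs_sub_le (a b : ℝ) : |a - b| ^ 2 ≤ 2 * (|a| ^ 2 + |b| ^ 2) := by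
  simp only [sq_abs]
  nlinarith [sq_nonneg (a + b)]

lemma sq_abs_add_sq_abs_rpow_le (hs : 0 ≤ s) (a b : ℝ) :
    (|a| ^ 2 + |b| ^ 2) ^ (s / 2) ≤ 2 ^ (s / 2) * (|a| ^ s + |b| ^ s) := by
  simpa only [sq_rpow_div_two (abs_nonneg _)] using
    add_rpow_le_two_rpow_mul_rpow_add_rpow (s / 2) (sq_nonneg |a|) (sq_nonneg |b|) (by positivity)

lemma rpow_mul_sq_abs_sub_le (hs : 0 ≤ s) (a b : ℝ) :
    (|a| ^ 2 + |b| ^ 2) ^ ((s - 2) / 2) * |a - b| ^ 2 ≤ 2 ^ (s / 2 + 1) * (|a| ^ s + |b| ^ s) :=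
  calc _ ≤ 2 * (|a| ^ 2 + |b| ^ 2) ^ (s / 2) :=
        rpow_sub_two_div_two_mul_sq_le (abs_nonneg _) (sq_abs_sub_le a b)
    _ ≤ 2 * (2 ^ (s / 2) * (|a| ^ s + |b| ^ s)) := by
        gcongr; exact sq_abs_add_sq_abs_rpow_le hs a b
    _ = _ := by rw [rpow_add_one two_ne_zero]; ring

lemma exists_abs_sub_rpow_le (hs : 0 < s) {ε : ℝ} (hε : 0 < ε) :
    ∃ C > 0, ∀ a b : ℝ, |a - b| ^ s ≤
      ε * (|a| ^ s + |b| ^ s) + C * ((|a| ^ 2 + |b| ^ 2) ^ ((s - 2) / 2) * |a - b| ^ 2) := by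
  obtain ⟨C, hC, hle⟩ :=
    exists_rpow_le_mul_rpow_add_mul hs (ε := ε / 2 ^ (s / 2)) (by positivity)
  refine ⟨C, hC, fun a b =>
    (hle _ _ (abs_nonneg _) (sq_abs_sub_le a b)).trans (add_le_add_left ?_ _)⟩
  calc ε / 2 ^ (s / 2) * (|a| ^ 2 + |b| ^ 2) ^ (s / 2)
      ≤ ε / 2 ^ (s / 2) * (2 ^ (s / 2) * (|a| ^ s + |b| ^ s)) := by
        gcongr; exact sq_abs_add_sq_abs_rpow_le hs.le a b
    _ = ε * (|a| ^ s + |b| ^ s) := by field_simp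

end

section
variable {α : Type*} [MeasurableSpace α] {μ : Measure α} {V u h : α → ℝ} {s : ℝ}

lemma integrable_mul_rpow_mul_sq_abs_sub (hs : 0 ≤ s) (hV₀ : ∀ x, 0 ≤ V x)
    (hV : AEStronglyMeasurable V μ) (hu : Measurable u) (hh : Measurable h)
    (hVu : Integrable (fun x => V x * |u x| ^ s) μ)
    (hVh : Integrable (fun x => V x * |h x| ^ s) μ) :
    Integrable (fun x => V x * (|u x| ^ 2 + |h x| ^ 2) ^ ((s - 2) / 2) * |u x - h x| ^ 2) μ := by
  have hVuh : Integrable (fun x => V x * |u x| ^ s + V x * |h x| ^ s) μ := hVu.add hVh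
  refine (hVuh.const_mul (2 ^ (s / 2 + 1))).mono' ?_ (.of_forall fun x => ?_)
  · exact (hV.mul (((hu.abs.pow_const 2).add (hh.abs.pow_const 2)).pow_const _
      ).aestronglyMeasurable).mul ((hu.sub hh).abs.pow_const 2).aestronglyMeasurable
  · rw [norm_of_nonneg (mul_nonneg (mul_nonneg (hV₀ x) (by positivity)) (by positivity)),
      mul_assoc]
    calc _ ≤ V x * (2 ^ (s / 2 + 1) * (|u x| ^ s + |h x| ^ s)) :=
          mul_le_mul_of_nonneg_left (rpow_mul_sq_abs_sub_le hs _ _) (hV₀ x)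
      _ = _ := by ring

lemma exists_integral_abs_sub_rpow_le (hs : 0 < s) (hV₀ : ∀ x, 0 ≤ V x)
    (hV : AEStronglyMeasurable V μ) (hu : Measurable u) (hh : Measurable h)
    (hVu : Integrable (fun x => V x * |u x| ^ s) μ)
    (hVh : Integrable (fun x => V x * |h x| ^ s) μ) {ε : ℝ} (hε : 0 < ε) :
    ∃ C > 0, ∫ x, V x * |u x - h x| ^ s ∂μ ≤
      ε * ((∫ x, V x * |u x| ^ s ∂μ) + ∫ x, V x * |h x| ^ s ∂μ) +
        C * ∫ x, V x * (|u x| ^ 2 + |h x| ^ 2) ^ ((s - 2) / 2) * |u x - h x| ^ 2 ∂μ := by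
  obtain ⟨C, hC, hpt⟩ := exists_abs_sub_rpow_le hs hε
  have hQ := integrable_mul_rpow_mul_sq_abs_sub hs.le hV₀ hV hu hh hVu hVh
  have hVuh : Integrable (fun x => V x * |u x| ^ s + V x * |h x| ^ s) μ := hVu.add hVh
  have hdom : Integrable (fun x => ε * (V x * |u x| ^ s + V x * |h x| ^ s) +
      C * (V x * (|u x| ^ 2 + |h x| ^ 2) ^ ((s - 2) / 2) * |u x - h x| ^ 2)) μ :=
    (hVuh.const_mul ε).add (hQ.const_mul C)
  have hle : ∀ x, V x * |u x - h x| ^ s ≤ ε * (V x * |u x| ^ s + V x * |h x| ^ s) +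
      C * (V x * (|u x| ^ 2 + |h x| ^ 2) ^ ((s - 2) / 2) * |u x - h x| ^ 2) := fun x =>
    calc _ ≤ V x * (ε * (|u x| ^ s + |h x| ^ s) +
          C * ((|u x| ^ 2 + |h x| ^ 2) ^ ((s - 2) / 2) * |u x - h x| ^ 2)) :=
        mul_le_mul_of_nonneg_left (hpt _ _) (hV₀ x)
      _ = _ := by ring
  have hint : Integrable (fun x => V x * |u x - h x| ^ s) μ :=
    hdom.mono' (hV.mul ((hu.sub hh).abs.pow_const s).aestronglyMeasurable)
      (.of_forall fun x => (norm_of_nonneg (mul_nonneg (hV₀ x) (by positivity))).trans_le (hle x))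
  refine ⟨C, hC, (integral_mono hint hdom hle).trans_eq ?_⟩
  rw [integral_add (hVuh.const_mul ε) (hQ.const_mul C), integral_const_mul,
    integral_const_mul, integral_add hVu hVh]

end

theorem lower_order_absorption_general (n : ℕ) (p s c₁ c₂ : ℝ)
    (hs : 1 < s) (hc₁ : 0 < c₁) (hc₂ : 0 < c₂)
    (Ω' : Set (EuclideanSpace ℝ (Fin n)))
    (V : EuclideanSpace ℝ (Fin n) → ℝ) (hV₀ : ∀ x, 0 ≤ V x)
    (hVint : IntegrableOn V Ω' volume)
    (u h : EuclideanSpace ℝ (Fin n) → ℝ)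
    (hum : Measurable u) (hhm : Measurable h)
    (F : EuclideanSpace ℝ (Fin n) → EuclideanSpace ℝ (Fin n))
    (hVu : IntegrableOn (fun x => V x * |u x| ^ s) Ω' volume)
    (hVh : IntegrableOn (fun x => V x * |h x| ^ s) Ω' volume)
    -- weighted quadratic control of `u - h`
    (hquad : ∫ x in Ω', V x * (|u x| ^ 2 + |h x| ^ 2) ^ ((s - 2) / 2) * |u x - h x| ^ 2 ≤
      c₁ * ∫ x in Ω', ‖F x‖ ^ p)
    -- energy bound for `V|h|^s`
    (henergy : ∫ x in Ω', V x * |h x| ^ s ≤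
      c₂ * ((∫ x in Ω', V x * |u x| ^ s) + ∫ x in Ω', ‖F x‖ ^ p)) :
    ∀ ε : ℝ, 0 < ε → ε < 1 → ∃ c > 0,
      ∫ x in Ω', V x * |u x - h x| ^ s ≤
        ε * (∫ x in Ω', V x * |u x| ^ s) + c * ∫ x in Ω', ‖F x‖ ^ p := by
  intro ε hε _
  obtain ⟨C, hC, habs⟩ := exists_integral_abs_sub_rpow_le (by linarith) hV₀
    hVint.aestronglyMeasurable hum hhm hVu hVh (ε := ε / (1 + c₂)) (by positivity)
  refine ⟨ε / (1 + c₂) * c₂ + C * c₁, by positivity, ?_⟩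
  calc _ ≤ ε / (1 + c₂) * ((∫ x in Ω', V x * |u x| ^ s) + ∫ x in Ω', V x * |h x| ^ s) +
        C * ∫ x in Ω', V x * (|u x| ^ 2 + |h x| ^ 2) ^ ((s - 2) / 2) * |u x - h x| ^ 2 := habs
    _ ≤ ε / (1 + c₂) * ((∫ x in Ω', V x * |u x| ^ s) +
          c₂ * ((∫ x in Ω', V x * |u x| ^ s) + ∫ x in Ω', ‖F x‖ ^ p)) +
        C * (c₁ * ∫ x in Ω', ‖F x‖ ^ p) := by gcongr
    _ = _ := by field_simp; ring

/-- Absorption estimate for the lower order term (estimate (4.4)):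
from the weighted quadratic control of `u - h` and the energy bound for
`V|h|^s`, deduce `∫ V|u-h|^s ≤ ε ∫ V|u|^s + c(ε) ∫ |F|^p`. -/
theorem lower_order_absorption (n : ℕ) (p s c₁ c₂ : ℝ)
    (hp : 2 ≤ p) (hs : 1 < s) (hc₁ : 0 < c₁) (hc₂ : 0 < c₂)
    (Ω' : Set (EuclideanSpace ℝ (Fin n))) (hΩ'open : IsOpen Ω')
    (hΩ'bdd : Bornology.IsBounded Ω')
    (V : EuclideanSpace ℝ (Fin n) → ℝ) (hV₀ : ∀ x, 0 ≤ V x)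
    (hVint : IntegrableOn V Ω' volume)
    (u h : EuclideanSpace ℝ (Fin n) → ℝ)
    (hum : Measurable u) (hhm : Measurable h)
    (F : EuclideanSpace ℝ (Fin n) → EuclideanSpace ℝ (Fin n))
    (hFint : IntegrableOn (fun x => ‖F x‖ ^ p) Ω' volume)
    (hVu : IntegrableOn (fun x => V x * |u x| ^ s) Ω' volume)
    (hVh : IntegrableOn (fun x => V x * |h x| ^ s) Ω' volume)
    -- weighted quadratic control of `u - h`
    (hquad : ∫ x in Ω', V x * (|u x| ^ 2 + |h x| ^ 2) ^ ((s - 2) / 2) * |u x - h x| ^ 2 ≤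
      c₁ * ∫ x in Ω', ‖F x‖ ^ p)
    -- energy bound for `V|h|^s`
    (henergy : ∫ x in Ω', V x * |h x| ^ s ≤
      c₂ * ((∫ x in Ω', V x * |u x| ^ s) + ∫ x in Ω', ‖F x‖ ^ p)) :
    ∀ ε : ℝ, 0 < ε → ε < 1 → ∃ c > 0,
      ∫ x in Ω', V x * |u x - h x| ^ s ≤
        ε * (∫ x in Ω', V x * |u x| ^ s) + c * ∫ x in Ω', ‖F x‖ ^ p :=
  lower_order_absorption_general n p s c₁ c₂ hs hc₁ hc₂ Ω' V hV₀ hVint u h hum hhm F hVu hVh hquad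
    henergy
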